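/- arXiv:2605.10518 — 2 statements merged into one kernel-verified Lean document; each statement's English description precedes it below -/
import Mathlib

section
/- For the interpolating discrete diffusion with prior π, for s < t the posterior q(z_s | z_t, x) defined by Bayes' rule from the forward kernels equals Cat( [α_{t|s} z_t + (1−α_{t|s}) 1 π^T z_t] ⊙ [α_s x + (1−α_s) π] / (α_t z_t^T x + (1−α_t) z_t^T π) ), where ⊙ is the componentwise product, 1 is the all-ones vector, and α_{t|s} = α_t/α_s. -/
open Finset Real Filter MeasureTheory
open scoped BigOperators Classical

noncomputable section

variable {Ω : Type*} [Fintype Ω]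

/-- A probability mass function on a finite type. -/
def IsPMF {σ : Type*} [Fintype σ] (μ : σ → ℝ) : Prop := (∀ s, 0 ≤ μ s) ∧ ∑ s, μ s = 1

/-- Probability of an event under a pmf. -/
def pr (μ : Ω → ℝ) (E : Ω → Prop) : ℝ := ∑ ω, if E ω then μ ω else 0

/-- Conditional probability of `E` given `F`. -/
def condPr (μ : Ω → ℝ) (E F : Ω → Prop) : ℝ := pr μ (fun ω => E ω ∧ F ω) / pr μ F

/-- Shannon entropy of a random variable. -/
def entropy {γ : Type*} [Fintype γ] (μ : Ω → ℝ) (C : Ω → γ) : ℝ :=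
  - ∑ c, pr μ (fun ω => C ω = c) * Real.log (pr μ (fun ω => C ω = c))

/-- Conditional entropy H(X | C). -/
def condEntropy {γ δ : Type*} [Fintype γ] [Fintype δ] (μ : Ω → ℝ) (X : Ω → δ) (C : Ω → γ) : ℝ :=
  - ∑ x, ∑ c, pr μ (fun ω => X ω = x ∧ C ω = c) *
      Real.log (pr μ (fun ω => X ω = x ∧ C ω = c) / pr μ (fun ω => C ω = c))

/-- Mutual information I(A;B). -/
def mutInfo {α β : Type*} [Fintype α] [Fintype β] (μ : Ω → ℝ) (A : Ω → α) (B : Ω → β) : ℝ :=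
  ∑ a, ∑ b, pr μ (fun ω => A ω = a ∧ B ω = b) *
    Real.log (pr μ (fun ω => A ω = a ∧ B ω = b) /
      (pr μ (fun ω => A ω = a) * pr μ (fun ω => B ω = b)))

/-- Conditional mutual information I(A;B|C). -/
def condMutInfo {α β γ : Type*} [Fintype α] [Fintype β] [Fintype γ]
    (μ : Ω → ℝ) (A : Ω → α) (B : Ω → β) (C : Ω → γ) : ℝ :=
  ∑ a, ∑ b, ∑ c,
    pr μ (fun ω => A ω = a ∧ B ω = b ∧ C ω = c) *
      Real.log (pr μ (fun ω => A ω = a ∧ B ω = b ∧ C ω = c) * pr μ (fun ω => C ω = c) /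
        (pr μ (fun ω => A ω = a ∧ C ω = c) * pr μ (fun ω => B ω = b ∧ C ω = c)))

/-- Conditional total correlation TC(Z|W) = E_W [ KL( p(Z|W) ‖ ∏_ℓ p(Z^ℓ|W) ) ]. -/
def condTC {L : ℕ} {α β : Type*} [Fintype α] [Fintype β] (μ : Ω → ℝ)
    (Z : Ω → (Fin L → α)) (W : Ω → β) : ℝ :=
  ∑ w, pr μ (fun ω => W ω = w) * ∑ z : Fin L → α,
    condPr μ (fun ω => Z ω = z) (fun ω => W ω = w) *
      Real.log (condPr μ (fun ω => Z ω = z) (fun ω => W ω = w) /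
        ∏ ℓ, condPr μ (fun ω => Z ω ℓ = z ℓ) (fun ω => W ω = w))

/-- The one-hot vector at index `i`. -/
def oneHot {K : ℕ} (i : Fin K) : Fin K → ℝ := fun j => if j = i then 1 else 0

/-- Bayes' rule posterior of the interpolating discrete diffusion.
With forward kernels q(z_t|z_s) = Cat(α_{t|s} z_s + (1−α_{t|s})pi) and
q(z_s|x) = Cat(α_s x + (1−α_s)pi), the posterior q(z_s|z_t,x) obtained by Bayes' rule
(normalizing q(z_t|z_s)q(z_s|x) over z_s) equals
Cat([α_{t|s} z_t + (1−α_{t|s}) 1 piᵀz_t] ⊙ [α_s x + (1−α_s) pi] / (α_t z_tᵀx + (1−α_t) z_tᵀpi)),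
where z_t = oneHot k, x = oneHot i (so piᵀz_t = pi k, z_tᵀx = x k, z_tᵀpi = pi k). -/
theorem stmt7 {K : ℕ} (pi : Fin K → ℝ) (hpi : IsPMF pi)
    (αs αt : ℝ) (hαt : 0 < αt) (hts : αt ≤ αs) (hs1 : αs ≤ 1)
    (i k : Fin K)
    (hden : 0 < αt * oneHot i k + (1 - αt) * pi k) :
    ∀ j : Fin K,
      (((αt / αs) * oneHot j k + (1 - αt / αs) * pi k) *
          (αs * oneHot i j + (1 - αs) * pi j)) /
        (∑ j' : Fin K,
          ((αt / αs) * oneHot j' k + (1 - αt / αs) * pi k) *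
            (αs * oneHot i j' + (1 - αs) * pi j'))
      = (((αt / αs) * oneHot k j + (1 - αt / αs) * pi k) *
          (αs * oneHot i j + (1 - αs) * pi j)) /
        (αt * oneHot i k + (1 - αt) * pi k) := by

  have hαs : (0:ℝ) < αs := lt_of_lt_of_le hαt hts
  have hαs' : αs ≠ 0 := ne_of_gt hαs
  have hsum : (∑ j' : Fin K,
      ((αt / αs) * oneHot j' k + (1 - αt / αs) * pi k) *
        (αs * oneHot i j' + (1 - αs) * pi j'))
      = αt * oneHot i k + (1 - αt) * pi k := by
    have h1 : ∀ j' : Fin K,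
        ((αt / αs) * oneHot j' k + (1 - αt / αs) * pi k) *
          (αs * oneHot i j' + (1 - αs) * pi j')
        = (αt / αs) * (oneHot j' k * (αs * oneHot i j' + (1 - αs) * pi j'))
          + (1 - αt / αs) * pi k * (αs * oneHot i j' + (1 - αs) * pi j') := by
      intro j'; ring
    rw [Finset.sum_congr rfl (fun j' _ => h1 j'), Finset.sum_add_distrib]
    have h2 : (∑ j' : Fin K, (αt / αs) * (oneHot j' k * (αs * oneHot i j' + (1 - αs) * pi j')))
        = (αt / αs) * (αs * oneHot i k + (1 - αs) * pi k) := by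
      rw [← Finset.mul_sum]
      congr 1
      simp [oneHot, ite_mul, eq_comm]
    have h3 : (∑ j' : Fin K, (1 - αt / αs) * pi k * (αs * oneHot i j' + (1 - αs) * pi j'))
        = (1 - αt / αs) * pi k := by
      rw [← Finset.mul_sum]
      have : (∑ j' : Fin K, (αs * oneHot i j' + (1 - αs) * pi j')) = 1 := by
        rw [Finset.sum_add_distrib, ← Finset.mul_sum, ← Finset.mul_sum, hpi.2]
        simp [oneHot]
      rw [this, mul_one]
    rw [h2, h3]
    field_simp
    ring
  intro j
  rw [hsum]
  have : oneHot j k = oneHot k j := by simp [oneHot, eq_comm]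
  rw [this]
end
end

section
/- In masked diffusion (prior π = m, a mask one-hot vector with ⟨m, x⟩ = 0 for all data one-hots x), the general posterior formula simplifies: if z_t ≠ m then q(z_s|z_t,x) = Cat(z_t) (the token is carried over deterministically), and if z_t = m then q(z_s|z_t,x) = Cat( ((1−α_s) m + (α_s−α_t) x) / (1−α_t) ). -/
open Finset Real Filter MeasureTheory
open scoped BigOperators Classical

noncomputable section

variable {Ω : Type*} [Fintype Ω]

/-- The general interpolating-diffusion posterior
q(z_s|z_t,x) = Cat([α_{t|s} z_t + (1−α_{t|s}) 1 piᵀz_t] ⊙ [α_s x + (1−α_s)pi]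
                   / (α_t z_tᵀx + (1−α_t) z_tᵀpi)),
evaluated at the j-th category, with z_t = oneHot k and x = oneHot i. -/
def post {K : ℕ} (pi : Fin K → ℝ) (αs αt : ℝ) (k i j : Fin K) : ℝ :=
  (((αt / αs) * oneHot k j + (1 - αt / αs) * pi k) *
      (αs * oneHot i j + (1 - αs) * pi j)) /
    (αt * oneHot i k + (1 - αt) * pi k)

@[simp] lemma oneHot_self {K : ℕ} (i : Fin K) : oneHot i i = 1 := if_pos rfl

lemma oneHot_of_ne {K : ℕ} {i j : Fin K} (h : j ≠ i) : oneHot i j = 0 := if_neg h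

-- With no prior mass on `z_t = x`, only the term `α_{t|s} z_t ⊙ α_s x` survives, normalised by `α_t`.
lemma post_self_of_prior_eq_zero {K : ℕ} {pi : Fin K → ℝ} {αs αt : ℝ} {k : Fin K}
    (hk : pi k = 0) (hαs : αs ≠ 0) (hαt : αt ≠ 0) (j : Fin K) :
    post pi αs αt k k j = oneHot k j := by
  rcases eq_or_ne j k with rfl | hjk
  · simp only [post, oneHot_self, hk, mul_zero, add_zero]
    field_simp
  · simp [post, hk, oneHot_of_ne hjk]

lemma post_mask {K : ℕ} {m i : Fin K} (him : i ≠ m) {αs αt : ℝ} (hαs : αs ≠ 0) (j : Fin K) :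
    post (oneHot m) αs αt m i j
      = ((1 - αs) * oneHot m j + (αs - αt) * oneHot i j) / (1 - αt) := by
  have hmi : oneHot i m = 0 := oneHot_of_ne him.symm
  rcases eq_or_ne j m with rfl | hjm
  · simp only [post, oneHot_self, hmi]
    ring
  rcases eq_or_ne j i with rfl | hji
  · simp only [post, oneHot_self, oneHot_of_ne hjm, hmi, mul_zero, add_zero, zero_add]
    field_simp
  · simp [post, oneHot_of_ne hjm, oneHot_of_ne hji]

theorem stmt8_general {K : ℕ} (mIdx i : Fin K) (him : i ≠ mIdx)
    (αs αt : ℝ) (h0 : 0 < αt) (hts : αt < αs) :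
    (∀ j : Fin K, post (oneHot mIdx) αs αt i i j = oneHot i j)
    ∧ (∀ j : Fin K, post (oneHot mIdx) αs αt mIdx i j
        = ((1 - αs) * oneHot mIdx j + (αs - αt) * oneHot i j) / (1 - αt)) := by
  have hαs : αs ≠ 0 := (h0.trans hts).ne'
  exact ⟨post_self_of_prior_eq_zero (oneHot_of_ne him) hαs h0.ne', post_mask him hαs⟩

/-- in masked diffusion (prior = mask one-hot m orthogonal to data one-hots),
the posterior simplifies: if z_t ≠ m (so z_t = x, i.e. k = i) then q(z_s|z_t,x) = Cat(z_t),
and if z_t = m then q(z_s|z_t,x) = Cat(((1−α_s)m + (α_s−α_t)x)/(1−α_t)). -/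
theorem stmt8 {K : ℕ} (mIdx i : Fin K) (him : i ≠ mIdx)
    (αs αt : ℝ) (h0 : 0 < αt) (hts : αt < αs) (hs1 : αs ≤ 1) :
    (∀ j : Fin K, post (oneHot mIdx) αs αt i i j = oneHot i j)
    ∧ (∀ j : Fin K, post (oneHot mIdx) αs αt mIdx i j
        = ((1 - αs) * oneHot mIdx j + (αs - αt) * oneHot i j) / (1 - αt)) :=
  stmt8_general mIdx i him αs αt h0 hts
end
end
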